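/- A quadruple (ȳ₁,ȳ₂,z̄,x̄) ∈ ℝ⁴ with z̄ ≥ 0 is a saddle point of the Lagrangian, i.e. L(ȳ₁,ȳ₂,z̄;x) ≤ L(ȳ₁,ȳ₂,z̄;x̄) ≤ L(y₁,y₂,z;x̄) for all x ∈ ℝ, all (y₁,y₂) ∈ ℝ² and all z ≥ 0, if and only if ȳ₁ ≥ −ln 2, ȳ₂ = 2, z̄ = 0 and x̄ = −4. -/

import Mathlib

/-!
Maximality in `x` of the affine function `x ↦ L(ȳ, z̄; x)` forces feasibility `ȳ₂ = z̄ + 2`.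
Testing minimality against `(0, 2, 0)`, where `L = 4`, then gives `ȳ₂² ≤ 4`, hence `ȳ₂ = 2`,
`z̄ = 0` and `e^{-ȳ₁} ≤ 2`. Near `y₂ = 2` the max defining `L(0, y₂, 0; x̄)` is `y₂²`, so
`y₂ ↦ y₂² + x̄ (y₂ - 2)` has a local minimum at `2` and its derivative `4 + x̄` vanishes.
Conversely, `L(y, z; -4) ≥ y₂² - 4 (y₂ - 2) = (y₂ - 2)² + 4 ≥ 4` for `z ≥ 0`.
-/

open Real Filter

/-- The Lagrangian of the concrete problem:
`L(y₁, y₂, z; x) = max(e^{-y₁} + y₂, y₂²) + x (y₂ - z - 2)`. -/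
noncomputable def Lcon (y₁ y₂ z x : ℝ) : ℝ :=
  max (Real.exp (-y₁) + y₂) (y₂ ^ 2) + x * (y₂ - z - 2)

theorem eq_zero_of_forall_mul_le {b x₀ : ℝ} (h : ∀ x : ℝ, x * b ≤ x₀ * b) : b = 0 := by
  have := h (x₀ + b)
  nlinarith

theorem Lcon_of_feasible {y₁ y₂ z : ℝ} (h : y₂ - z - 2 = 0) (x : ℝ) :
    Lcon y₁ y₂ z x = max (exp (-y₁) + y₂) (y₂ ^ 2) := by
  rw [Lcon, h, mul_zero, add_zero]

theorem Lcon_two_zero (y₁ x : ℝ) : Lcon y₁ 2 0 x = max (exp (-y₁) + 2) 4 := by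
  rw [Lcon_of_feasible (by norm_num)]
  norm_num

theorem Lcon_two_zero_le_four_iff {y₁ x : ℝ} : Lcon y₁ 2 0 x ≤ 4 ↔ -log 2 ≤ y₁ := by
  rw [Lcon_two_zero, max_le_iff, neg_le, le_log_iff_exp_le two_pos]
  constructor
  · rintro ⟨h, -⟩
    linarith
  · intro h
    exact ⟨by linarith, le_rfl⟩

theorem Lcon_two_zero_eq_four {y₁ : ℝ} (hy₁ : -log 2 ≤ y₁) (x : ℝ) : Lcon y₁ 2 0 x = 4 :=
  le_antisymm (Lcon_two_zero_le_four_iff.mpr hy₁) ((Lcon_two_zero y₁ x).symm ▸ le_max_right _ _)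

theorem four_le_Lcon_neg_four (y₁ y₂ : ℝ) {z : ℝ} (hz : 0 ≤ z) : 4 ≤ Lcon y₁ y₂ z (-4) := by
  have hsq := le_max_right (exp (-y₁) + y₂) (y₂ ^ 2)
  rw [Lcon]
  nlinarith [sq_nonneg (y₂ - 2)]

theorem Lcon_zero_zero_of_lt {y₂ : ℝ} (hy₂ : 1.7 < y₂) (x : ℝ) :
    Lcon 0 y₂ 0 x = y₂ ^ 2 + x * (y₂ - 2) := by
  rw [Lcon, neg_zero, exp_zero, sub_zero, max_eq_right (by nlinarith)]

theorem eq_neg_four_of_forall_four_le_Lcon {x : ℝ} (h : ∀ y₂ : ℝ, 4 ≤ Lcon 0 y₂ 0 x) :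
    x = -4 := by
  have hmin : IsLocalMin (fun t : ℝ ↦ t ^ 2 + x * (t - 2)) 2 := by
    filter_upwards [Ioi_mem_nhds (by norm_num : (1.7 : ℝ) < 2)] with t ht
    rw [← Lcon_zero_zero_of_lt ht]
    norm_num [h t]
  have hderiv : HasDerivAt (fun t : ℝ ↦ t ^ 2 + x * (t - 2)) (2 * 2 + x) 2 :=
    ((hasDerivAt_pow 2 2).add (((hasDerivAt_id 2).sub_const 2).const_mul x)).congr_deriv
      (by norm_num)
  linarith [hmin.hasDerivAt_eq_zero hderiv]

/-- **Saddle points of the Lagrangian.**  A quadruple `(ȳ₁, ȳ₂, z̄, x̄)` with `z̄ ≥ 0` is a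
saddle point of the Lagrangian (maximizing in `x`, minimizing in `(y₁, y₂, z)` with
`z ≥ 0`) if and only if `ȳ₁ ≥ -ln 2`, `ȳ₂ = 2`, `z̄ = 0` and `x̄ = -4`. -/
theorem stmt_9 (yb1 yb2 zb xb : ℝ) (hzb : 0 ≤ zb) :
    ((∀ x : ℝ, Lcon yb1 yb2 zb x ≤ Lcon yb1 yb2 zb xb) ∧
      (∀ y₁ y₂ z : ℝ, 0 ≤ z → Lcon yb1 yb2 zb xb ≤ Lcon y₁ y₂ z xb)) ↔
    (-Real.log 2 ≤ yb1 ∧ yb2 = 2 ∧ zb = 0 ∧ xb = -4) := by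
  constructor
  · rintro ⟨hmax, hmin⟩
    have hfeas : yb2 - zb - 2 = 0 :=
      eq_zero_of_forall_mul_le fun x ↦ by simpa [Lcon] using hmax x
    have hval := Lcon_of_feasible (y₁ := yb1) hfeas xb
    have hle : Lcon yb1 yb2 zb xb ≤ 4 := by
      simpa [Lcon_two_zero_eq_four (neg_nonpos.mpr (log_nonneg one_le_two))] using hmin 0 2 0 le_rfl
    have hsq : yb2 ^ 2 ≤ 4 := (le_max_right _ _).trans (hval ▸ hle)
    have hyb2 : yb2 = 2 := by nlinarith
    have hzb0 : zb = 0 := by linarith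
    subst hyb2 hzb0
    have hyb1 : -log 2 ≤ yb1 := Lcon_two_zero_le_four_iff.mp hle
    refine ⟨hyb1, rfl, rfl, eq_neg_four_of_forall_four_le_Lcon fun y₂ ↦ ?_⟩
    simpa [Lcon_two_zero_eq_four hyb1] using hmin 0 y₂ 0 le_rfl
  · rintro ⟨hyb1, rfl, rfl, rfl⟩
    refine ⟨fun x ↦ ?_, fun y₁ y₂ z hz ↦ ?_⟩
    · rw [Lcon_two_zero_eq_four hyb1, Lcon_two_zero_eq_four hyb1]
    · rw [Lcon_two_zero_eq_four hyb1]
      exact four_le_Lcon_neg_four y₁ y₂ hz
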